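/- arXiv:2003.11112 — 4 statements merged into one kernel-verified Lean document; each statement's English description precedes it below -/
import Mathlib

section
/- Let 0 ≤ k ≤ n−1 and let λ ∈ ℝⁿ with S_k(λ) ≠ 0. Then ∑_{i=1}^n λ_i² (∂Q_k/∂λ_i)(λ) = (k+1)Q_k(λ)² − (k+2)·S_{k+2}(λ)/S_k(λ); equivalently, at points where also S_{k+1}(λ) ≠ 0, this equals (k+1)Q_k(λ)² − (k+2)Q_{k+1}(λ)Q_k(λ). -/
/-!
Since `S_{m+1}` is affine in `λ_i` with slope `S_m(λ | i)` (the elementary symmetric polynomial of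
the other entries), `λ_i ∂S_m/∂λ_i = S_m - S_m(λ | i)` for every `m`, and Euler's identity reads
`∑ λ_i S_m(λ | i) = (m + 1) S_{m+1}`. By the quotient rule,
`λ_i² ∂Q_k/∂λ_i = λ_i (S_{k+1} S_k(λ | i) - S_k S_{k+1}(λ | i)) / S_k²`, and summing over `i`
gives `((k + 1) S_{k+1}² - (k + 2) S_k S_{k+2}) / S_k²`.
-/

open Finset

/-- `eS k f` is the elementary symmetric polynomial `S_k` of degree `k` in the entries of the
tuple `f : ι → ℝ` (so `eS 0 f = 1` and `eS k f = 0` for `k > card ι`). -/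
noncomputable def eS {ι : Type*} [DecidableEq ι] [Fintype ι] (k : ℕ) (f : ι → ℝ) : ℝ :=
  ∑ t ∈ Finset.univ.powersetCard k, ∏ i ∈ t, f i

/-- `Q k f = S_{k+1}(f) / S_k(f)`. -/
noncomputable def Q {ι : Type*} [DecidableEq ι] [Fintype ι] (k : ℕ) (f : ι → ℝ) : ℝ :=
  eS (k + 1) f / eS k f

/-- `pdQ k i f` is the `i`-th partial derivative `∂Q_k/∂λ_i` evaluated at `f`. -/
noncomputable def pdQ {n : ℕ} (k : ℕ) (i : Fin n) (f : Fin n → ℝ) : ℝ :=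
  deriv (fun s : ℝ => Q k (f + s • (Pi.single i 1 : Fin n → ℝ))) 0

section

variable {ι : Type*} [DecidableEq ι] [Fintype ι]

/-- `S_m(λ | i)`: the elementary symmetric polynomial of the entries other than `λ_i`. -/
noncomputable def eSExcept (i : ι) (m : ℕ) (f : ι → ℝ) : ℝ :=
  ∑ t ∈ univ.powersetCard m with i ∉ t, ∏ j ∈ t, f j

lemma sum_powersetCard_succ_mem_prod (i : ι) (m : ℕ) (f : ι → ℝ) :
    ∑ t ∈ univ.powersetCard (m + 1) with i ∈ t, ∏ j ∈ t, f j = f i * eSExcept i m f := by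
  rw [eSExcept, mul_sum]
  refine sum_nbij' (fun t => t.erase i) (insert i) ?_ ?_ ?_ ?_ ?_
  · intro t ht
    simp only [mem_filter, mem_powersetCard, subset_univ, true_and] at ht ⊢
    simp [card_erase_of_mem ht.2, ht.1]
  · intro t ht
    simp only [mem_filter, mem_powersetCard, subset_univ, true_and] at ht ⊢
    simp [card_insert_of_notMem ht.2, ht.1]
  · exact fun t ht => insert_erase (mem_filter.1 ht).2
  · exact fun t ht => erase_insert (mem_filter.1 ht).2
  · exact fun t ht => (mul_prod_erase _ _ (mem_filter.1 ht).2).symm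

lemma eS_succ_eq (i : ι) (m : ℕ) (f : ι → ℝ) :
    eS (m + 1) f = eSExcept i (m + 1) f + f i * eSExcept i m f := by
  rw [eS, ← sum_filter_not_add_sum_filter _ (fun t => i ∈ t),
    sum_powersetCard_succ_mem_prod]
  rfl

/-- Euler's identity for the homogeneous polynomial `S_{m+1}`. -/
lemma sum_mul_eSExcept (m : ℕ) (f : ι → ℝ) :
    ∑ i, f i * eSExcept i m f = (m + 1) * eS (m + 1) f := by
  simp_rw [← sum_powersetCard_succ_mem_prod, sum_filter]
  rw [sum_comm, eS, mul_sum]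
  refine sum_congr rfl fun t ht => ?_
  rw [← sum_filter, filter_mem_eq_inter, univ_inter, sum_const, (mem_powersetCard.1 ht).2]
  simp

lemma eSExcept_add_smul_single (i : ι) (m : ℕ) (f : ι → ℝ) (s : ℝ) :
    eSExcept i m (f + s • Pi.single i 1) = eSExcept i m f := by
  refine sum_congr rfl fun t ht => prod_congr rfl fun j hj => ?_
  have hji : j ≠ i := fun h => (mem_filter.1 ht).2 (h ▸ hj)
  simp [Pi.single_eq_of_ne hji]

lemma hasDerivAt_eS_succ_line (i : ι) (m : ℕ) (f : ι → ℝ) :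
    HasDerivAt (fun s : ℝ => eS (m + 1) (f + s • Pi.single i 1)) (eSExcept i m f) 0 := by
  have hline : (fun s : ℝ => eS (m + 1) (f + s • Pi.single i 1))
      = fun s => eSExcept i (m + 1) f + (f i + s) * eSExcept i m f := by
    funext s
    rw [eS_succ_eq i, eSExcept_add_smul_single, eSExcept_add_smul_single]
    simp
  rw [hline]
  simpa using (((hasDerivAt_id (0 : ℝ)).const_add (f i)).mul_const (eSExcept i m f)).const_add
    (eSExcept i (m + 1) f)

lemma differentiableAt_eS_line (i : ι) (m : ℕ) (f : ι → ℝ) :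
    DifferentiableAt ℝ (fun s : ℝ => eS m (f + s • Pi.single i 1)) 0 := by
  cases m with
  | zero => simp [eS]
  | succ m => exact (hasDerivAt_eS_succ_line i m f).differentiableAt

/-- Multiplying by `λ_i` makes the formula uniform in `m`: for `m = 0` both sides vanish. -/
lemma mul_deriv_eS_line (i : ι) (m : ℕ) (f : ι → ℝ) :
    f i * deriv (fun s : ℝ => eS m (f + s • Pi.single i 1)) 0 = eS m f - eSExcept i m f := by
  cases m with
  | zero => simp [eS, eSExcept, filter_singleton]
  | succ m =>
    rw [(hasDerivAt_eS_succ_line i m f).deriv, eS_succ_eq i]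
    ring

end

lemma sq_mul_pdQ {n : ℕ} (k : ℕ) (i : Fin n) (f : Fin n → ℝ) (hS : eS k f ≠ 0) :
    f i ^ 2 * pdQ k i f
      = f i * (eS (k + 1) f * eSExcept i k f - eS k f * eSExcept i (k + 1) f) / eS k f ^ 2 := by
  have hS' : eS k (f + (0 : ℝ) • Pi.single i 1) ≠ 0 := by simpa using hS
  have hd1 := mul_deriv_eS_line i (k + 1) f
  have hd0 := mul_deriv_eS_line i k f
  have hQ := (differentiableAt_eS_line i (k + 1) f).hasDerivAt.div
    (differentiableAt_eS_line i k f).hasDerivAt hS'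
  rw [show pdQ k i f = _ from hQ.deriv]
  simp only [zero_smul, add_zero]
  field_simp
  linear_combination eS k f * f i * hd1 - eS (k + 1) f * f i * hd0

theorem sum_sq_mul_pdQ_general (n k : ℕ) (lam : Fin n → ℝ) (hS : eS k lam ≠ 0) :
    (∑ i, (lam i) ^ 2 * pdQ k i lam
        = ((k : ℝ) + 1) * (Q k lam) ^ 2 - ((k : ℝ) + 2) * eS (k + 2) lam / eS k lam)
    ∧ (eS (k + 1) lam ≠ 0 →
        ∑ i, (lam i) ^ 2 * pdQ k i lam
          = ((k : ℝ) + 1) * (Q k lam) ^ 2 - ((k : ℝ) + 2) * Q (k + 1) lam * Q k lam) := by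
  have hmain : ∑ i, lam i ^ 2 * pdQ k i lam
      = ((k : ℝ) + 1) * Q k lam ^ 2 - ((k : ℝ) + 2) * eS (k + 2) lam / eS k lam := by
    simp_rw [sq_mul_pdQ k _ lam hS, ← sum_div, mul_sub, sum_sub_distrib, mul_left_comm (lam _),
      ← mul_sum, sum_mul_eSExcept, Q]
    push_cast
    field_simp
    ring
  refine ⟨hmain, fun hS₁ => ?_⟩
  rw [hmain, Q, Q]
  field_simp

/-- For `0 ≤ k ≤ n−1` and `λ ∈ ℝⁿ` with `S_k(λ) ≠ 0`:
`∑_{i=1}^n λ_i² (∂Q_k/∂λ_i)(λ) = (k+1)Q_k(λ)² − (k+2)·S_{k+2}(λ)/S_k(λ)`; equivalently, if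
moreover `S_{k+1}(λ) ≠ 0`, this equals `(k+1)Q_k(λ)² − (k+2)Q_{k+1}(λ)Q_k(λ)`. -/
theorem sum_sq_mul_pdQ (n k : ℕ) (hk : k + 1 ≤ n) (lam : Fin n → ℝ) (hS : eS k lam ≠ 0) :
    (∑ i, (lam i) ^ 2 * pdQ k i lam
        = ((k : ℝ) + 1) * (Q k lam) ^ 2 - ((k : ℝ) + 2) * eS (k + 2) lam / eS k lam)
    ∧ (eS (k + 1) lam ≠ 0 →
        ∑ i, (lam i) ^ 2 * pdQ k i lam
          = ((k : ℝ) + 1) * (Q k lam) ^ 2 - ((k : ℝ) + 2) * Q (k + 1) lam * Q k lam) :=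
  sum_sq_mul_pdQ_general n k lam hS
end

section
/- For all integers 0 ≤ l ≤ k ≤ n−1 and every λ ∈ Γ_{k+1} ⊂ ℝⁿ, one has Q_k(λ) ≤ ((l+1)(n−k))/((k+1)(n−l)) · Q_l(λ). -/
/-!
Newton's inequality `(m+2)(n-m) S_m S_{m+2} ≤ (m+1)(n-m-1) S_{m+1}²` holds for every real `λ`.
Differentiating `∏ (x + λᵢ)` exactly `n-m-2` times, reversing it and differentiating `m` more
times leaves a quadratic with coefficients proportional to `S_{m+2}, S_{m+1}, S_m`. It is
real-rooted, because reversal preserves real-rootedness and so does differentiation (Rolle), so its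
discriminant is nonnegative, and that is Newton's inequality.
On `Γ_{k+1}` the numbers `S_0, …, S_{k+1}` are positive. There Newton's inequality says that
`(m+1)/(n-m) · Q_m = E_{m+1}/E_m`, with `E_m = S_m / C(n,m)`, is nonincreasing for `m ≤ k`.
Comparing the values at `k` and at `l` gives the theorem.
-/

open Finset

/-- The Garding cone `Γ_m = {λ ∈ ℝⁿ : S_l(λ) > 0 for l = 1,…,m}`. -/
def Gamma (n m : ℕ) : Set (Fin n → ℝ) :=
  {lam | ∀ l : ℕ, 1 ≤ l → l ≤ m → 0 < eS l lam}

theorem Nat.add_one_descFactorial (m : ℕ) :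
    (m + 1).descFactorial m = (m + 1).factorial := by
  simpa using Nat.factorial_mul_descFactorial (Nat.le_add_right m 1)

theorem Nat.two_mul_add_two_descFactorial (m : ℕ) :
    2 * (m + 2).descFactorial m = (m + 2).factorial := by
  simpa using Nat.factorial_mul_descFactorial (Nat.le_add_right m 2)

namespace Polynomial

theorem Splits.derivative_of_real {p : ℝ[X]} (hp : p.Splits) : p.derivative.Splits := by
  rcases eq_or_ne p.natDegree 0 with hd | hd
  · rw [derivative_of_natDegree_zero hd]
    exact Splits.zero
  have := splits_iff_card_roots.mp hp
  have := card_roots_le_derivative p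
  have := natDegree_derivative_le p
  have := card_roots' p.derivative
  exact splits_iff_card_roots.mpr (by omega)

theorem Splits.iterate_derivative_of_real {p : ℝ[X]} (hp : p.Splits) (k : ℕ) :
    (derivative^[k] p).Splits := by
  induction k with
  | zero => exact hp
  | succ k ih => rw [Function.iterate_succ_apply']; exact ih.derivative_of_real

section Field

variable {K : Type*} [Field K]

theorem Splits.reverse {p : K[X]} (hp : p.Splits) : p.reverse.Splits := by
  induction hp using Submonoid.closure_induction with
  | mem f hf =>
    rcases hf with ⟨a, rfl⟩ | ⟨a, rfl⟩
    · simp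
    · exact .of_natDegree_le_one ((reverse_natDegree_le _).trans (natDegree_X_add_C a).le)
  | one => rw [← C_1, reverse_C]; exact Splits.C 1
  | mul f g _ _ hf hg => rw [reverse_mul_of_domain]; exact hf.mul hg

theorem Splits.reflect {p : K[X]} (hp : p.Splits) {N : ℕ} (hN : p.natDegree ≤ N) :
    (p.reflect N).Splits := by
  have : p.reflect N = X ^ (N - p.natDegree) * p.reverse := by
    rw [← reflect_one, Polynomial.reverse, ← reflect_mul 1 p (by simp) le_rfl, one_mul,
      Nat.sub_add_cancel hN]
  rw [this]
  exact (Splits.X_pow _).mul hp.reverse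

theorem Splits.discrim_nonneg [LinearOrder K] [IsStrictOrderedRing K] {q : K[X]} (hq : q.Splits)
    (hd : q.natDegree ≤ 2) : 0 ≤ discrim (q.coeff 2) (q.coeff 1) (q.coeff 0) := by
  rcases eq_or_ne (q.coeff 2) 0 with ha | ha
  · rw [ha, discrim]
    nlinarith [sq_nonneg (q.coeff 1)]
  have hdeg : q.natDegree = 2 := le_antisymm hd (le_natDegree_of_ne_zero ha)
  obtain ⟨x, hx⟩ := hq.exists_eval_eq_zero (by
    rw [degree_eq_natDegree (fun h => ha (by simp [h])), hdeg]; decide)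
  rw [eval_eq_sum_range, hdeg] at hx
  simp only [Finset.sum_range_succ, Finset.sum_range_zero] at hx
  rw [discrim_eq_sq_of_quadratic_eq_zero (x := x) (by linear_combination hx)]
  exact sq_nonneg _

end Field

theorem Splits.two_mul_coeff_zero_mul_coeff_two_le {p : ℝ[X]} (hp : p.Splits) {m : ℕ}
    (hm : p.natDegree ≤ m + 2) :
    2 * (m + 2) * (p.coeff 0 * p.coeff 2) ≤ (m + 1) * p.coeff 1 ^ 2 := by
  have hq : (derivative^[m] (p.reflect (m + 2))).natDegree ≤ 2 := by
    have := natDegree_iterate_derivative (p.reflect (m + 2)) m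
    have := natDegree_reflect_le (N := m + 2) (p := p)
    grind
  -- the quadratic is `(m+2)!/2 · a₀ X² + (m+1)! · a₁ X + m! · a₂`
  have hcoeff (j : ℕ) (hj : j ≤ 2) : (derivative^[m] (p.reflect (m + 2))).coeff j =
      (m + j).descFactorial m * p.coeff (2 - j) := by
    rw [coeff_iterate_derivative, nsmul_eq_mul, coeff_reflect, revAt_le (by omega),
      show m + 2 - (j + m) = 2 - j by omega, add_comm j]
  have hdisc := (hp.reflect hm).iterate_derivative_of_real m |>.discrim_nonneg hq
  rw [hcoeff 0 (by norm_num), hcoeff 1 (by norm_num), hcoeff 2 (by norm_num), discrim] at hdisc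
  have d2 : 2 * ((m + 2).descFactorial m : ℝ) = (m + 2) * (m + 1) * m.factorial := by
    exact_mod_cast (Nat.two_mul_add_two_descFactorial m).trans
      (by simp [Nat.factorial_succ]; ring)
  simp only [add_zero, Nat.descFactorial_self, Nat.add_one_descFactorial, Nat.reduceSub,
    Nat.factorial_succ, Nat.cast_mul] at hdisc
  push_cast at hdisc
  refine le_of_mul_le_mul_left ?_ (by positivity : (0 : ℝ) < (m + 1) * m.factorial ^ 2)
  linear_combination hdisc - 2 * m.factorial * p.coeff 0 * p.coeff 2 * d2

end Polynomial

open Polynomial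

theorem coeff_prod_X_add_C_eq_eS {ι : Type*} [DecidableEq ι] [Fintype ι] (f : ι → ℝ) {j : ℕ}
    (hj : j ≤ Fintype.card ι) :
    (∏ i, (X + C (f i))).coeff j = eS (Fintype.card ι - j) f :=
  Finset.prod_X_add_C_coeff _ _ hj

theorem eS_mul_eS_le_sq {ι : Type*} [DecidableEq ι] [Fintype ι] (f : ι → ℝ) {m : ℕ}
    (hm : m + 2 ≤ Fintype.card ι) :
    (m + 2) * (Fintype.card ι - m) * (eS m f * eS (m + 2) f) ≤
      (m + 1) * (Fintype.card ι - m - 1) * eS (m + 1) f ^ 2 := by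
  obtain ⟨D, hD⟩ := Nat.exists_eq_add_of_le hm
  set P : ℝ[X] := ∏ i, (X + C (f i))
  have hP : P.Splits := Splits.prod fun i _ => Splits.X_add_C (f i)
  have hPdeg : P.natDegree ≤ Fintype.card ι := (natDegree_prod_le _ _).trans (by simp)
  have hq := (hP.iterate_derivative_of_real D).two_mul_coeff_zero_mul_coeff_two_le (m := m)
    (by have := natDegree_iterate_derivative P D; omega)
  have hcoeff (j : ℕ) (hj : j ≤ 2) : (derivative^[D] P).coeff j =
      (D + j).descFactorial D * eS (m + 2 - j) f := by
    rw [coeff_iterate_derivative, nsmul_eq_mul, coeff_prod_X_add_C_eq_eS f (by omega), add_comm j,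
      show Fintype.card ι - (D + j) = m + 2 - j by omega]
  rw [hcoeff 0 (by norm_num), hcoeff 1 (by norm_num), hcoeff 2 (by norm_num)] at hq
  have d2 : 2 * ((D + 2).descFactorial D : ℝ) = (D + 2) * (D + 1) * D.factorial := by
    exact_mod_cast (Nat.two_mul_add_two_descFactorial D).trans
      (by simp [Nat.factorial_succ]; ring)
  simp only [add_zero, Nat.descFactorial_self, Nat.add_one_descFactorial,
    Nat.factorial_succ, Nat.cast_mul] at hq
  push_cast at hq
  have hcard : (Fintype.card ι : ℝ) = m + 2 + D := by rw [hD]; push_cast; ring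
  rw [hcard]
  refine le_of_mul_le_mul_left ?_ (by positivity : (0 : ℝ) < (D + 1) * D.factorial ^ 2)
  linear_combination hq - (m + 2) * D.factorial * eS m f * eS (m + 2) f * d2

theorem eS_pos_of_mem_Gamma {n m l : ℕ} {lam : Fin n → ℝ} (hlam : lam ∈ Gamma n m) (hl : l ≤ m) :
    0 < eS l lam := by
  rcases Nat.eq_zero_or_pos l with rfl | hl0
  · simp [eS]
  · exact hlam l hl0 hl

/-- The quotient `E_{k+1} / E_k` of the normalized `E_k = S_k / C(n, k)`. -/
noncomputable def normalizedQ {n : ℕ} (k : ℕ) (lam : Fin n → ℝ) : ℝ :=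
  (k + 1) / (n - k) * Q k lam

theorem normalizedQ_succ_le {n m : ℕ} {lam : Fin n → ℝ} (hm : m + 2 ≤ n)
    (h0 : 0 < eS m lam) (h1 : 0 < eS (m + 1) lam) :
    normalizedQ (m + 1) lam ≤ normalizedQ m lam := by
  have newton := eS_mul_eS_le_sq lam (by simpa using hm)
  have hnm : (m : ℝ) + 2 ≤ n := by exact_mod_cast hm
  simp only [Fintype.card_fin] at newton
  rw [normalizedQ, normalizedQ, Q, Q, div_mul_div_comm, div_mul_div_comm,
    div_le_div_iff₀ (by push_cast; nlinarith) (by nlinarith)]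
  push_cast
  linear_combination newton

theorem normalizedQ_le_of_le {n k l : ℕ} {lam : Fin n → ℝ} (hlk : l ≤ k) (hk : k + 1 ≤ n)
    (hlam : lam ∈ Gamma n (k + 1)) : normalizedQ k lam ≤ normalizedQ l lam := by
  induction k, hlk using Nat.le_induction with
  | base => rfl
  | succ k hlk ih =>
    have hlam' : lam ∈ Gamma n (k + 1) := fun j hj1 hj2 => hlam j hj1 (by omega)
    exact (normalizedQ_succ_le hk (eS_pos_of_mem_Gamma hlam' k.le_succ)
      (eS_pos_of_mem_Gamma hlam' le_rfl)).trans (ih (by omega) hlam')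

/-- For all `0 ≤ l ≤ k ≤ n−1` and every `λ ∈ Γ_{k+1} ⊂ ℝⁿ`:
`Q_k(λ) ≤ ((l+1)(n−k))/((k+1)(n−l)) · Q_l(λ)`. -/
theorem Q_monotone_quotient (n k l : ℕ) (hlk : l ≤ k) (hk : k + 1 ≤ n)
    (lam : Fin n → ℝ) (hlam : lam ∈ Gamma n (k + 1)) :
    Q k lam ≤ (((l : ℝ) + 1) * ((n : ℝ) - k)) / (((k : ℝ) + 1) * ((n : ℝ) - l)) * Q l lam := by
  have hmono := normalizedQ_le_of_le hlk hk hlam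
  rw [normalizedQ, normalizedQ] at hmono
  have hk' : (0 : ℝ) < n - k := by
    have : (k : ℝ) + 1 ≤ n := by exact_mod_cast hk
    linarith
  have hl' : (0 : ℝ) < n - l := by
    have : (l : ℝ) ≤ k := by exact_mod_cast hlk
    linarith
  calc Q k lam = (n - k) / (k + 1) * ((k + 1) / (n - k) * Q k lam) := by field_simp
    _ ≤ (n - k) / (k + 1) * ((l + 1) / (n - l) * Q l lam) := by gcongr
    _ = _ := by field_simp
end

section
/- Let n ≥ 2 and let A be an n×n real symmetric arrowhead matrix (A_{ij} = 0 for all 2 ≤ i ≠ j ≤ n). Then for every integer l ≥ 0, S_l(A) = S_l(λ̃) + A_{11} S_{l−1}(λ̃) − ∑_{j=2}^n A_{1j}² S_{l−2}(λ̃|j), where λ̃ = (A_{22},…,A_{nn}) ∈ ℝ^{n−1}. -/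
open Finset

/-- `eSZ l f` is the elementary symmetric polynomial of integer degree `l` in the entries of `f`,
with the convention that it vanishes for negative `l`. -/
noncomputable def eSZ {ι : Type*} [DecidableEq ι] [Fintype ι] (l : ℤ) (f : ι → ℝ) : ℝ :=
  if 0 ≤ l then eS l.toNat f else 0

/-- `mS l B` is the sum of all `l×l` principal minors of the matrix `B`, so that
`det (t•1 + B) = ∑ l, mS l B * t^(n-l)`; in particular `mS 0 B = 1` and `mS l B = 0` for
`l > card ι`. -/
noncomputable def mS {ι : Type*} [DecidableEq ι] [Fintype ι] (l : ℕ) (B : Matrix ι ι ℝ) : ℝ :=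
  ∑ t ∈ Finset.univ.powersetCard l,
    Matrix.det (Matrix.of fun i j : {x : ι // x ∈ t} => B i.1 j.1)

/-- `mSZ l B` is `mS l B` for `l ≥ 0` and `0` for negative `l`. -/
noncomputable def mSZ {ι : Type*} [DecidableEq ι] [Fintype ι] (l : ℤ) (B : Matrix ι ι ℝ) : ℝ :=
  if 0 ≤ l then mS l.toNat B else 0

/-!
Only the identity and the transpositions through the head `a` contribute to the Leibniz
expansion of the determinant of an arrowhead matrix, so
`det M = M a a * ∏_{i ≠ a} M i i - ∑_{j ≠ a} M a j * M j a * ∏_{i ≠ a, j} M i i`.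
A principal submatrix avoiding the head is diagonal, and one containing it is again arrowhead.
Hence the `l × l` principal minors avoiding the head sum to `S_l(λ̃)`, while those containing it
sum to `A₁₁ S_{l-1}(λ̃) - ∑_{|s| = l-1} ∑_{j ∈ s} A₁ⱼ² ∏_{s \ {j}} Aᵢᵢ`; exchanging the two sums
in the last term (choose `j` first, then `s \ {j}` of size `l - 2` avoiding `j`) gives
`∑ⱼ A₁ⱼ² S_{l-2}(λ̃|j)`.
-/

theorem Equiv.Perm.eq_one_or_eq_swap_of_forall_apply_ne {ι : Type*} [DecidableEq ι]
    (σ : Equiv.Perm ι) (a : ι) (h : ∀ i, i ≠ a → σ i ≠ a → σ i = i) :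
    σ = 1 ∨ ∃ j ≠ a, σ = Equiv.swap a j := by
  set b := σ.symm a
  have hσb : σ b = a := σ.apply_symm_apply a
  have hfix : ∀ i, i ≠ a → i ≠ b → σ i = i := fun i hia hib =>
    h i hia fun hi => hib (σ.injective (hi.trans hσb.symm))
  by_cases hba : b = a
  · left
    ext i
    by_cases hia : i = a
    · simp [hia, ← hba, hσb]
    · simp [hfix i hia (hba ▸ hia)]
  · right
    have hσa : σ a = b := by
      by_contra hab
      have hσa_ne : σ a ≠ a := fun haa => hba (σ.injective (hσb.trans haa.symm))
      exact hσa_ne (σ.injective (hfix (σ a) hσa_ne hab))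
    refine ⟨b, hba, Equiv.ext fun i => ?_⟩
    by_cases hia : i = a
    · simp [hia, hσa]
    by_cases hib : i = b
    · simp [hib, hσb]
    · rw [hfix i hia hib, Equiv.swap_apply_of_ne_of_ne hia hib]

namespace Matrix

variable {ι R : Type*}

def IsArrowheadAt [Zero R] (M : Matrix ι ι R) (a : ι) : Prop :=
  ∀ i j, i ≠ a → j ≠ a → i ≠ j → M i j = 0

theorem IsArrowheadAt.submatrix_val [Zero R] {M : Matrix ι ι R} {a : ι} (hM : M.IsArrowheadAt a)
    {p : ι → Prop} (ha : p a) :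
    (M.submatrix (Subtype.val : Subtype p → ι) Subtype.val).IsArrowheadAt ⟨a, ha⟩ :=
  fun i j hi hj hij => hM i j (fun h => hi (Subtype.ext h)) (fun h => hj (Subtype.ext h)) fun h => hij (Subtype.ext h)

variable [DecidableEq ι] [CommRing R]

theorem IsArrowheadAt.det_eq [Fintype ι] {M : Matrix ι ι R} {a : ι} (hM : M.IsArrowheadAt a) :
    M.det = M a a * ∏ i ∈ univ.erase a, M i i
      - ∑ j ∈ univ.erase a, M a j * M j a * ∏ i ∈ (univ.erase a).erase j, M i i := by
  have h1 : (1 : Equiv.Perm ι) ∉ (univ.erase a).image (Equiv.swap a) := by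
    simp [Equiv.swap_eq_one_iff, eq_comm]
  have hvanish : ∀ σ ∉ insert 1 ((univ.erase a).image (Equiv.swap a)),
      Equiv.Perm.sign σ • ∏ i, M (σ i) i = 0 := by
    intro σ hσ
    obtain ⟨i, hia, hσa, hσi⟩ : ∃ i, i ≠ a ∧ σ i ≠ a ∧ σ i ≠ i := by
      by_contra! h
      rcases σ.eq_one_or_eq_swap_of_forall_apply_ne a h with rfl | ⟨j, hja, rfl⟩
      exacts [hσ (mem_insert_self _ _),
        hσ (mem_insert_of_mem (mem_image_of_mem _ (mem_erase.2 ⟨hja, mem_univ j⟩)))]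
    rw [prod_eq_zero (f := fun i => M (σ i) i) (mem_univ i) (hM _ _ hσa hia hσi), smul_zero]
  have hswap : ∀ j ∈ univ.erase a, ∏ i, M (Equiv.swap a j i) i
      = M a j * M j a * ∏ i ∈ (univ.erase a).erase j, M i i := by
    intro j hj
    rw [← mul_prod_erase univ (fun i => M (Equiv.swap a j i) i) (mem_univ a),
      ← mul_prod_erase _ _ hj, Equiv.swap_apply_left, Equiv.swap_apply_right]
    have : ∀ i ∈ (univ.erase a).erase j, M (Equiv.swap a j i) i = M i i := fun i hi => by
      simp only [mem_erase] at hi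
      rw [Equiv.swap_apply_of_ne_of_ne hi.2.1 hi.1]
    rw [prod_congr rfl this]
    ring
  rw [det_apply, ← sum_subset (subset_univ _) fun σ _ => hvanish σ, sum_insert h1,
    sum_image fun _ _ _ _ h => Equiv.swap_injective_of_left a h, sub_eq_add_neg,
    ← sum_neg_distrib]
  congr 1
  · rw [Equiv.Perm.sign_one, one_smul, ← mul_prod_erase univ _ (mem_univ a)]
    rfl
  refine sum_congr rfl fun j hj => ?_
  rw [Equiv.Perm.sign_swap (mem_erase.1 hj).1.symm, hswap j hj, Units.neg_smul, one_smul]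

variable {M : Matrix ι ι R} {a : ι}

theorem IsArrowheadAt.det_submatrix_val_of_notMem (hM : M.IsArrowheadAt a) {t : Finset ι}
    (ha : a ∉ t) :
    (M.submatrix (Subtype.val : {x // x ∈ t} → ι) Subtype.val).det = ∏ i ∈ t, M i i := by
  have hdiag : M.submatrix (Subtype.val : {x // x ∈ t} → ι) Subtype.val
      = diagonal fun i : {x // x ∈ t} => M i i := by
    ext i j
    by_cases hij : i = j
    · simp [hij]
    · exact (hM i j (ne_of_mem_of_not_mem i.2 ha) (ne_of_mem_of_not_mem j.2 ha)
        fun h => hij (Subtype.ext h)).trans (diagonal_apply_ne _ hij).symm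
  rw [hdiag, det_diagonal, prod_coe_sort t fun i => M i i]

theorem IsArrowheadAt.det_submatrix_val_insert (hM : M.IsArrowheadAt a) {s : Finset ι}
    (ha : a ∉ s) :
    (M.submatrix (Subtype.val : {x // x ∈ insert a s} → ι) Subtype.val).det
      = M a a * ∏ i ∈ s, M i i - ∑ j ∈ s, M a j * M j a * ∏ i ∈ s.erase j, M i i := by
  have hE : (univ.erase ⟨a, mem_insert_self a s⟩).map (Function.Embedding.subtype _) = s := by
    rw [map_erase, univ_eq_attach, attach_map_val, Function.Embedding.coe_subtype,
      erase_insert ha]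
  have hprod (j : {x // x ∈ insert a s}) :
      ∏ i ∈ (univ.erase ⟨a, mem_insert_self a s⟩).erase j, M i i = ∏ i ∈ s.erase j, M i i := by
    rw [← prod_subtype_map_embedding (g := fun i => M i i) fun _ _ => rfl, map_erase, hE]
    rfl
  rw [(hM.submatrix_val (mem_insert_self a s)).det_eq]
  simp only [submatrix_apply, hprod]
  rw [← prod_subtype_map_embedding (g := fun i => M i i) fun _ _ => rfl,
    ← sum_subtype_map_embedding (g := fun j => M a j * M j a * ∏ i ∈ s.erase j, M i i)
      fun _ _ => rfl, hE]

end Matrix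

theorem Finset.sum_powersetCard_succ_sum_erase {ι M : Type*} [DecidableEq ι] [AddCommMonoid M]
    (E : Finset ι) (m : ℕ) (F : ι → Finset ι → M) :
    ∑ s ∈ E.powersetCard (m + 1), ∑ j ∈ s, F j (s.erase j)
      = ∑ j ∈ E, ∑ s ∈ (E.erase j).powersetCard m, F j s := by
  rw [sum_comm' (t' := E) (s' := fun j => (E.powersetCard (m + 1)).filter (j ∈ ·))
    fun s j => by simp only [mem_filter, mem_powersetCard]; grind]
  refine sum_congr rfl fun j hj => sum_nbij' (·.erase j) (insert j) ?_ ?_ ?_ ?_ fun _ _ => rfl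
  · simp only [mem_filter, mem_powersetCard]
    rintro s ⟨⟨hsE, hcard⟩, hjs⟩
    exact ⟨erase_subset_erase j hsE, by rw [card_erase_of_mem hjs, hcard, Nat.add_sub_cancel]⟩
  · simp only [mem_filter, mem_powersetCard]
    rintro t ⟨htE, hcard⟩
    have hjt : j ∉ t := fun h => notMem_erase j E (htE h)
    exact ⟨⟨insert_subset hj (htE.trans (erase_subset j E)),
      by rw [card_insert_of_notMem hjt, hcard]⟩, mem_insert_self j t⟩
  · exact fun s hs => insert_erase (mem_filter.1 hs).2
  · exact fun t ht => erase_insert fun h => notMem_erase j E ((mem_powersetCard.1 ht).1 h)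

theorem Finset.sum_powersetCard_prod_map {κ ι M : Type*} [DecidableEq ι] [CommSemiring M]
    (u : Finset κ) (e : κ ↪ ι) (k : ℕ) (f : ι → M) :
    ∑ t ∈ u.powersetCard k, ∏ i ∈ t, f (e i) = ∑ t ∈ (u.map e).powersetCard k, ∏ i ∈ t, f i := by
  rw [powersetCard_map, sum_map]
  exact sum_congr rfl fun t _ => (prod_map t e f).symm

section

variable {ι : Type*} [DecidableEq ι] [Fintype ι]

theorem eSZ_natCast (k : ℕ) (f : ι → ℝ) : eSZ k f = eS k f := by
  simp [eSZ]

theorem eSZ_of_neg {l : ℤ} (hl : l < 0) (f : ι → ℝ) : eSZ l f = 0 :=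
  if_neg hl.not_ge

theorem mSZ_natCast (k : ℕ) (B : Matrix ι ι ℝ) : mSZ k B = mS k B := by
  simp [mSZ]

theorem eS_subtype_ne (a : ι) (k : ℕ) (f : ι → ℝ) :
    eS k (fun i : {x // x ≠ a} => f i) = ∑ t ∈ (univ.erase a).powersetCard k, ∏ i ∈ t, f i := by
  rw [← filter_ne', ← univ_map_subtype]
  exact sum_powersetCard_prod_map univ (Function.Embedding.subtype _) k f

theorem eS_subtype_ne_subtype_ne (a : ι) (j : {x // x ≠ a}) (k : ℕ) (f : ι → ℝ) :
    eS k (fun i : {x : {y // y ≠ a} // x ≠ j} => f i.1.1)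
      = ∑ t ∈ ((univ.erase a).erase j).powersetCard k, ∏ i ∈ t, f i := by
  rw [eS_subtype_ne j k fun i => f i.1]
  refine (sum_powersetCard_prod_map _ (Function.Embedding.subtype _) k f).trans ?_
  rw [map_erase, univ_map_subtype, filter_ne']
  rfl

theorem mS_zero (B : Matrix ι ι ℝ) : mS 0 B = 1 := by
  rw [mS, powersetCard_zero, sum_singleton]
  exact Matrix.det_isEmpty

theorem Matrix.IsArrowheadAt.mS_succ {A : Matrix ι ι ℝ} {a : ι} (hA : A.IsArrowheadAt a)
    (k : ℕ) :
    mS (k + 1) A = ∑ t ∈ (univ.erase a).powersetCard (k + 1), ∏ i ∈ t, A i i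
      + A a a * ∑ s ∈ (univ.erase a).powersetCard k, ∏ i ∈ s, A i i
      - ∑ s ∈ (univ.erase a).powersetCard k, ∑ j ∈ s, A a j * A j a * ∏ i ∈ s.erase j, A i i := by
  have ha : a ∉ univ.erase a := notMem_erase a univ
  have haE {s} (hs : s ∈ (univ.erase a).powersetCard k) : a ∉ s := fun h =>
    ha ((mem_powersetCard.1 hs).1 h)
  have hsplit : (univ : Finset ι).powersetCard (k + 1)
      = (univ.erase a).powersetCard (k + 1) ∪ ((univ.erase a).powersetCard k).image (insert a) := by
    rw [← powersetCard_succ_insert ha, insert_erase (mem_univ a)]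
  have hdisj : Disjoint ((univ.erase a).powersetCard (k + 1))
      (((univ.erase a).powersetCard k).image (insert a)) := by
    simp only [disjoint_left, mem_image, not_exists, not_and]
    exact fun t ht s _ hst => ha ((mem_powersetCard.1 ht).1 (hst ▸ mem_insert_self a s))
  have hinj : Set.InjOn (insert a) ((univ.erase a).powersetCard k : Set (Finset ι)) :=
    fun s hs t ht hst => by rw [← erase_insert (haE hs), ← erase_insert (haE ht), hst]
  rw [mS, hsplit, sum_union hdisj, sum_image hinj, mul_sum, add_sub_assoc, ← sum_sub_distrib]
  congr 1
  · exact sum_congr rfl fun t ht => hA.det_submatrix_val_of_notMem fun h =>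
      ha ((mem_powersetCard.1 ht).1 h)
  · exact sum_congr rfl fun s hs => hA.det_submatrix_val_insert (haE hs)

theorem Matrix.IsArrowheadAt.mS_add_two {A : Matrix ι ι ℝ} {a : ι} (hA : A.IsArrowheadAt a)
    (m : ℕ) :
    mS (m + 2) A = ∑ t ∈ (univ.erase a).powersetCard (m + 2), ∏ i ∈ t, A i i
      + A a a * ∑ s ∈ (univ.erase a).powersetCard (m + 1), ∏ i ∈ s, A i i
      - ∑ j ∈ univ.erase a, A a j * A j a *
          ∑ s ∈ ((univ.erase a).erase j).powersetCard m, ∏ i ∈ s, A i i := by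
  simp only [hA.mS_succ, sum_powersetCard_succ_sum_erase (univ.erase a) m
    fun j s => A a j * A j a * ∏ i ∈ s, A i i, mul_sum]

end

/-- Let `A` be an `n×n` (`n = N+2 ≥ 2`) real symmetric arrowhead matrix (`A i j = 0` whenever
`i, j` are both different from the first index and from each other). Then for every `l ≥ 0`,
`S_l(A) = S_l(λ̃) + A_{11} S_{l−1}(λ̃) − ∑_{j≥2} A_{1j}² S_{l−2}(λ̃|j)`, where
`λ̃ = (A_{22},…,A_{nn})`. -/
theorem mS_arrowhead (N : ℕ) (A : Matrix (Fin (N + 2)) (Fin (N + 2)) ℝ)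
    (hsymm : A.IsSymm)
    (harrow : ∀ i j : Fin (N + 2), i ≠ 0 → j ≠ 0 → i ≠ j → A i j = 0)
    (l : ℕ) :
    mSZ (l : ℤ) A
      = eSZ (l : ℤ) (fun i : {x : Fin (N + 2) // x ≠ 0} => A i.1 i.1)
        + A 0 0 * eSZ ((l : ℤ) - 1) (fun i : {x : Fin (N + 2) // x ≠ 0} => A i.1 i.1)
        - ∑ j : {x : Fin (N + 2) // x ≠ 0},
            (A 0 j.1) ^ 2 *
              eSZ ((l : ℤ) - 2)
                (fun i : {x : {y : Fin (N + 2) // y ≠ 0} // x ≠ j} => A i.1.1 i.1.1) := by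
  have hA : A.IsArrowheadAt 0 := harrow
  have hdiag (k : ℕ) := eS_subtype_ne (0 : Fin (N + 2)) k fun x => A x x
  have hnested (j : {x : Fin (N + 2) // x ≠ 0}) (k : ℕ) :=
    eS_subtype_ne_subtype_ne 0 j k fun x => A x x
  rcases l with _ | _ | m
  · simp only [mSZ_natCast, eSZ_natCast, mS_zero,
      eSZ_of_neg (by norm_num : ((0 : ℕ) : ℤ) - 1 < 0), eSZ_of_neg (by norm_num : ((0 : ℕ) : ℤ) - 2 < 0)]
    simp [eS]
  · rw [show ((0 + 1 : ℕ) : ℤ) - 1 = ((0 : ℕ) : ℤ) by simp]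
    simp only [mSZ_natCast, eSZ_natCast, hA.mS_succ, hdiag,
      eSZ_of_neg (by norm_num : ((0 + 1 : ℕ) : ℤ) - 2 < 0)]
    simp
  · rw [show ((m + 1 + 1 : ℕ) : ℤ) - 1 = (m + 1 : ℕ) by push_cast; ring,
      show ((m + 1 + 1 : ℕ) : ℤ) - 2 = m by push_cast; ring]
    simp only [mSZ_natCast, eSZ_natCast, hA.mS_add_two, hdiag, hnested]
    congr 1
    rw [sum_subtype (univ.erase 0) (p := (· ≠ 0)) (by simp)]
    refine sum_congr rfl fun j _ => ?_
    rw [hsymm.apply, sq]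
end

section
/- Let n ≥ 2, 1 ≤ k ≤ n−1, and let A be an n×n real symmetric arrowhead matrix with S_k(A) ≠ 0. Then ∑_{i=1}^n (∂Q_k/∂A_{ii})(A) = (n−k) − (n−k+1)·S_{k+1}(A)S_{k−1}(A)/S_k(A)². In particular, if moreover S_l(A) > 0 for l = 1,…,k+1, then ∑_{i=1}^n (∂Q_k/∂A_{ii})(A) ≤ n−k. -/
open Finset

/-- `mQ k B = S_{k+1}(B) / S_k(B)`. -/
noncomputable def mQ {ι : Type*} [DecidableEq ι] [Fintype ι] (k : ℕ) (B : Matrix ι ι ℝ) : ℝ :=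
  mS (k + 1) B / mS k B

/-- `pdmQ k i j B` is the partial derivative `∂Q_k/∂B_{ij}` of the function
`B ↦ Q_k(B) = S_{k+1}(B)/S_k(B)` of the matrix entries, with respect to the `(i,j)` entry,
evaluated at `B`. -/
noncomputable def pdmQ {ι : Type*} [DecidableEq ι] [Fintype ι] (k : ℕ) (i j : ι)
    (B : Matrix ι ι ℝ) : ℝ :=
  deriv (fun s : ℝ => mQ k (B + s • Matrix.single i j (1 : ℝ))) 0

/-!
Perturbing the diagonal entry `B i i` by `s` changes a principal minor containing `i` by
`s` times the principal minor with `i` removed, so `S_l` is affine along `E_ii` with slope the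
`S_{l-1}` of `B` with row and column `i` deleted. Summing these slopes over `i` counts every
`(l-1)`-subset once for each of the `n - l + 1` indices it avoids, whence
`∑ i, ∂S_l/∂B_ii = (n - l + 1) S_{l-1}`, and the quotient rule gives the formula for `Q_k`.
-/

namespace Matrix

variable {n R : Type*} [Fintype n] [DecidableEq n] [CommRing R]

theorem adjugate_apply_self (M : Matrix n n R) (i : n) :
    adjugate M i i = (M.toSquareBlockProp (· ≠ i)).det := by
  have : Subsingleton {j // ¬j ≠ i} :=
    ⟨fun a b => Subtype.ext <| (not_not.1 a.2).trans (not_not.1 b.2).symm⟩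
  rw [adjugate_apply, twoBlockTriangular_det _ (· ≠ i),
    det_eq_elem_of_subsingleton (toSquareBlockProp _ fun j => ¬j ≠ i) ⟨i, not_not.2 rfl⟩]
  · have hrows : (M.updateRow i (Pi.single i 1)).toSquareBlockProp (· ≠ i) =
        M.toSquareBlockProp (· ≠ i) := by
      ext a b
      simp [toSquareBlockProp_def, updateRow_ne a.2]
    simp [hrows, toSquareBlockProp_def]
  · intro r hr c hc
    rw [not_not.1 hr, updateRow_self, Pi.single_eq_of_ne hc]

theorem det_add_smul_single_self (M : Matrix n n R) (i : n) (s : R) :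
    (M + s • single i i 1).det = M.det + s * adjugate M i i := by
  have hrow : M + s • single i i 1 = M.updateRow i (M i + s • Pi.single i 1) := by
    ext a b
    by_cases ha : a = i
    · subst ha
      simp [single_apply, Pi.single_apply, eq_comm]
    · simp [ha, Ne.symm ha]
  rw [hrow, det_updateRow_add, det_updateRow_smul, updateRow_eq_self, adjugate_apply]

end Matrix

theorem Finset.sum_powersetCard_succ_insert {α β : Type*} [DecidableEq α] [AddCommMonoid β]
    {a : α} {s : Finset α} (ha : a ∉ s) (l : ℕ) (f : Finset α → β) :
    ∑ t ∈ powersetCard (l + 1) (insert a s), f t =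
      ∑ t ∈ powersetCard (l + 1) s, f t + ∑ t ∈ powersetCard l s, f (insert a t) := by
  rw [powersetCard_succ_insert ha, sum_union, sum_image]
  · exact insert_erase_invOn.2.injOn.mono fun t ht ↦ notMem_mono (mem_powersetCard.1 ht).1 ha
  · aesop (add simp [disjoint_left, insert_subset_iff, mem_powersetCard])

open Matrix

section PrincipalMinor

variable {ι R : Type*} [DecidableEq ι] [CommRing R]

def principalSubmatrix (B : Matrix ι ι R) (t : Finset ι) : Matrix t t R :=
  B.submatrix (↑) (↑)

noncomputable def principalMinor (B : Matrix ι ι R) (t : Finset ι) : R :=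
  (principalSubmatrix B t).det

theorem principalMinor_erase (B : Matrix ι ι R) {t : Finset ι} {i : ι} (hi : i ∈ t) :
    principalMinor B (t.erase i) =
      ((principalSubmatrix B t).toSquareBlockProp (· ≠ ⟨i, hi⟩)).det := by
  let e : t.erase i ≃ {a : t // a ≠ ⟨i, hi⟩} :=
    { toFun x :=
        ⟨⟨x, mem_of_mem_erase x.2⟩, fun h => ne_of_mem_erase x.2 (congrArg Subtype.val h)⟩
      invFun a := ⟨a.1, mem_erase.2 ⟨fun h => a.2 (Subtype.ext h), a.1.2⟩⟩ }
  exact det_submatrix_equiv_self e ((principalSubmatrix B t).toSquareBlockProp _)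

theorem principalSubmatrix_add_smul_single_of_mem (B : Matrix ι ι R) {t : Finset ι} {i : ι}
    (hi : i ∈ t) (s : R) :
    principalSubmatrix (B + s • single i i 1) t =
      principalSubmatrix B t + s • single ⟨i, hi⟩ ⟨i, hi⟩ 1 := by
  ext a b
  simp [principalSubmatrix, single_apply, Subtype.ext_iff, eq_comm]

theorem principalSubmatrix_add_smul_single_of_notMem (B : Matrix ι ι R) {t : Finset ι} {i : ι}
    (hi : i ∉ t) (s : R) :
    principalSubmatrix (B + s • single i i 1) t = principalSubmatrix B t := by
  ext a b
  have : (a : ι) ≠ i := fun h => hi (h ▸ a.2)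
  simp [principalSubmatrix, this.symm]

theorem principalMinor_add_smul_single_of_mem (B : Matrix ι ι R) {t : Finset ι} {i : ι}
    (hi : i ∈ t) (s : R) :
    principalMinor (B + s • single i i 1) t =
      principalMinor B t + s * principalMinor B (t.erase i) := by
  rw [principalMinor, principalSubmatrix_add_smul_single_of_mem B hi, det_add_smul_single_self,
    adjugate_apply_self, principalMinor_erase B hi, principalMinor]

theorem principalMinor_add_smul_single_of_notMem (B : Matrix ι ι R) {t : Finset ι} {i : ι}
    (hi : i ∉ t) (s : R) :
    principalMinor (B + s • single i i 1) t = principalMinor B t := by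
  rw [principalMinor, principalSubmatrix_add_smul_single_of_notMem B hi, principalMinor]

end PrincipalMinor

section SumOfPrincipalMinors

variable {ι : Type*} [Fintype ι] [DecidableEq ι]

theorem mS_eq_sum_principalMinor (l : ℕ) (B : Matrix ι ι ℝ) :
    mS l B = ∑ t ∈ univ.powersetCard l, principalMinor B t := rfl

noncomputable def mSErase (l : ℕ) (i : ι) (B : Matrix ι ι ℝ) : ℝ :=
  ∑ t ∈ (univ.erase i).powersetCard l, principalMinor B t

theorem mS_succ_eq_sum_add_sum_insert (l : ℕ) (B : Matrix ι ι ℝ) (i : ι) :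
    mS (l + 1) B = ∑ t ∈ (univ.erase i).powersetCard (l + 1), principalMinor B t +
      ∑ t ∈ (univ.erase i).powersetCard l, principalMinor B (insert i t) := by
  rw [mS_eq_sum_principalMinor, ← sum_powersetCard_succ_insert (notMem_erase i univ),
    insert_erase (mem_univ i)]

theorem mS_succ_add_smul_single (l : ℕ) (B : Matrix ι ι ℝ) (i : ι) (s : ℝ) :
    mS (l + 1) (B + s • single i i 1) = mS (l + 1) B + s * mSErase l i B := by
  have hout : ∀ t ∈ (univ.erase i).powersetCard (l + 1),
      principalMinor (B + s • single i i 1) t = principalMinor B t := fun t ht =>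
    principalMinor_add_smul_single_of_notMem B (subset_erase.1 (mem_powersetCard.1 ht).1).2 s
  have hin : ∀ t ∈ (univ.erase i).powersetCard l,
      principalMinor (B + s • single i i 1) (insert i t) =
        principalMinor B (insert i t) + s * principalMinor B t := fun t ht => by
    rw [principalMinor_add_smul_single_of_mem B (mem_insert_self i t),
      erase_insert (subset_erase.1 (mem_powersetCard.1 ht).1).2]
  rw [mS_succ_eq_sum_add_sum_insert l _ i, mS_succ_eq_sum_add_sum_insert l _ i, sum_congr rfl hout,
    sum_congr rfl hin, sum_add_distrib, mSErase, mul_sum, add_assoc]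

theorem sum_mSErase (l : ℕ) (B : Matrix ι ι ℝ) :
    ∑ i, mSErase l i B = ((Fintype.card ι : ℝ) - l) * mS l B := by
  simp only [mSErase]
  rw [sum_comm' (t' := univ.powersetCard l) (s' := fun t => tᶜ), mS_eq_sum_principalMinor,
    mul_sum]
  · refine sum_congr rfl fun t ht => ?_
    rw [sum_const, card_compl, nsmul_eq_mul, Nat.cast_sub (card_le_univ t),
      (mem_powersetCard.1 ht).2]
  · intro i t
    simp [mem_powersetCard, subset_erase, and_comm]

end SumOfPrincipalMinors

section QuotientDerivative

variable {ι : Type*} [Fintype ι] [DecidableEq ι]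

theorem hasDerivAt_mQ_succ_add_smul_single (m : ℕ) (B : Matrix ι ι ℝ) (i : ι)
    (h : mS (m + 1) B ≠ 0) :
    HasDerivAt (fun s : ℝ => mQ (m + 1) (B + s • single i i 1))
      ((mSErase (m + 1) i B * mS (m + 1) B - mS (m + 1 + 1) B * mSErase m i B) / mS (m + 1) B ^ 2)
      0 := by
  have hnum : HasDerivAt (fun s : ℝ => mS (m + 1 + 1) B + s * mSErase (m + 1) i B)
      (mSErase (m + 1) i B) 0 := (hasDerivAt_mul_const _).const_add _
  have hden : HasDerivAt (fun s : ℝ => mS (m + 1) B + s * mSErase m i B) (mSErase m i B) 0 :=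
    (hasDerivAt_mul_const _).const_add _
  simp only [mQ, mS_succ_add_smul_single]
  have hquot := hnum.div hden (by simpa using h)
  simp only [zero_mul, add_zero] at hquot
  exact hquot

theorem sum_pdmQ_self {k : ℕ} (hk : 1 ≤ k) (B : Matrix ι ι ℝ) (h : mS k B ≠ 0) :
    ∑ i, pdmQ k i i B = ((Fintype.card ι : ℝ) - k)
      - ((Fintype.card ι : ℝ) - k + 1) * (mS (k + 1) B * mS (k - 1) B) / mS k B ^ 2 := by
  obtain ⟨m, rfl⟩ := Nat.exists_eq_add_of_le' hk
  simp only [pdmQ, fun i => (hasDerivAt_mQ_succ_add_smul_single m B i h).deriv, ← sum_div,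
    sum_sub_distrib, ← sum_mul, ← mul_sum, sum_mSErase, Nat.add_sub_cancel]
  field_simp
  push_cast
  ring

end QuotientDerivative

theorem sum_pdmQ_diag_general (N k : ℕ) (hk1 : 1 ≤ k) (hk2 : k + 1 ≤ N + 2)
    (A : Matrix (Fin (N + 2)) (Fin (N + 2)) ℝ)
    (hS : mS k A ≠ 0) :
    (∑ i, pdmQ k i i A
        = (((N : ℝ) + 2) - k)
          - ((((N : ℝ) + 2) - k) + 1) * (mS (k + 1) A * mS (k - 1) A) / (mS k A) ^ 2)
    ∧ ((∀ l : ℕ, 1 ≤ l → l ≤ k + 1 → 0 < mS l A) →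
        ∑ i, pdmQ k i i A ≤ ((N : ℝ) + 2) - k) := by
  have heq := sum_pdmQ_self hk1 A hS
  rw [Fintype.card_fin, Nat.cast_add, Nat.cast_two] at heq
  refine ⟨heq, fun hpos => ?_⟩
  have hSk1 : 0 < mS (k + 1) A := hpos (k + 1) (by omega) le_rfl
  have hSk0 : 0 ≤ mS (k - 1) A := by
    rcases Nat.eq_or_lt_of_le hk1 with rfl | hlt
    · simp [mS_eq_sum_principalMinor, principalMinor]
    · exact (hpos (k - 1) (by omega) (by omega)).le
  have hk : (k : ℝ) ≤ N + 1 := by exact_mod_cast (by omega : k ≤ N + 1)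
  rw [heq, sub_le_self_iff]
  exact div_nonneg (mul_nonneg (by linarith) (mul_nonneg hSk1.le hSk0)) (sq_nonneg _)

/-- Let `A` be an `n×n` (`n = N+2 ≥ 2`) real symmetric arrowhead matrix with `1 ≤ k ≤ n−1` and
`S_k(A) ≠ 0`. Then `∑_{i=1}^n (∂Q_k/∂A_{ii})(A) = (n−k) − (n−k+1)·S_{k+1}(A)S_{k−1}(A)/S_k(A)²`;
in particular, if moreover `S_l(A) > 0` for `l = 1,…,k+1`, then
`∑_{i=1}^n (∂Q_k/∂A_{ii})(A) ≤ n−k`. -/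
theorem sum_pdmQ_diag (N k : ℕ) (hk1 : 1 ≤ k) (hk2 : k + 1 ≤ N + 2)
    (A : Matrix (Fin (N + 2)) (Fin (N + 2)) ℝ)
    (hsymm : A.IsSymm)
    (harrow : ∀ i j : Fin (N + 2), i ≠ 0 → j ≠ 0 → i ≠ j → A i j = 0)
    (hS : mS k A ≠ 0) :
    (∑ i, pdmQ k i i A
        = (((N : ℝ) + 2) - k)
          - ((((N : ℝ) + 2) - k) + 1) * (mS (k + 1) A * mS (k - 1) A) / (mS k A) ^ 2)
    ∧ ((∀ l : ℕ, 1 ≤ l → l ≤ k + 1 → 0 < mS l A) →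
        ∑ i, pdmQ k i i A ≤ ((N : ℝ) + 2) - k) :=
  sum_pdmQ_diag_general N k hk1 hk2 A hS
end
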